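/- Let U ⊂ R^{n-1} be a bounded set, u : closure(U) → R^n a topological embedding (continuous and injective with continuous inverse onto its image). Then there do not exist disjoint subsets U_1, U_2 ⊂ U, both simply connected Lipschitz domains, such that u|_{U_1} and u|_{U_2} interpenetrate simply. -/
import Mathlib


/- STATEMENT 14: a topological embedding of the closure of a bounded set
U ⊂ ℝ^{n-1} into ℝⁿ admits no pair of disjoint simply connected Lipschitz
subdomains on which its restrictions interpenetrate simply.
ℝⁿ is modelled as D × ℝ with D = ℝ^{d}, d = n-1.  The Brouwer degree is taken
as given, with the properties used in the argument (local constancy off the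
image of the boundary and vanishing outside the image of the closure). -/

open Set Filter Topology MeasureTheory Metric

noncomputable section

/-- `u₁ : U₁ → ℝⁿ` and `u₂ : U₂ → ℝⁿ` interpenetrate simply (Definition 2 of the
paper), relative to a Brouwer degree function `deg`. -/
def SimplyInterpenetrate (d : ℕ)
    (deg : ((EuclideanSpace ℝ (Fin d) × ℝ) → (EuclideanSpace ℝ (Fin d) × ℝ)) →
      Set (EuclideanSpace ℝ (Fin d) × ℝ) → (EuclideanSpace ℝ (Fin d) × ℝ) → ℤ)
    (U₁ U₂ : Set (EuclideanSpace ℝ (Fin d)))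
    (u₁ u₂ : EuclideanSpace ℝ (Fin d) → (EuclideanSpace ℝ (Fin d) × ℝ)) : Prop :=
  ∃ uhat : (EuclideanSpace ℝ (Fin d) × ℝ) → (EuclideanSpace ℝ (Fin d) × ℝ),
    ContinuousOn uhat (U₁ ×ˢ Icc (0:ℝ) 1) ∧
    (∀ x ∈ U₁, uhat (x, 0) = u₁ x) ∧
    (∃ k₁ k₂ : ℕ, k₁ ≠ k₂ ∧
      0 < volume {x ∈ U₂ | u₂ x ∉ uhat '' frontier (U₁ ×ˢ Icc (0:ℝ) 1) ∧
        deg uhat (U₁ ×ˢ Icc (0:ℝ) 1) (u₂ x) = (k₁ : ℤ)} ∧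
      0 < volume {x ∈ U₂ | u₂ x ∉ uhat '' frontier (U₁ ×ˢ Icc (0:ℝ) 1) ∧
        deg uhat (U₁ ×ˢ Icc (0:ℝ) 1) (u₂ x) = (k₂ : ℤ)}) ∧
    uhat '' (frontier (U₁ ×ˢ Icc (0:ℝ) 1) \ (U₁ ×ˢ ({0} : Set ℝ))) ∩ u₁ '' U₁ = ∅ ∧
    uhat '' (frontier (U₁ ×ˢ Icc (0:ℝ) 1) \ (U₁ ×ˢ ({0} : Set ℝ))) ∩
      closure (u₂ '' U₂) = ∅

theorem stmt14 (d : ℕ)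
    (deg : ((EuclideanSpace ℝ (Fin d) × ℝ) → (EuclideanSpace ℝ (Fin d) × ℝ)) →
      Set (EuclideanSpace ℝ (Fin d) × ℝ) → (EuclideanSpace ℝ (Fin d) × ℝ) → ℤ)
    -- local constancy of the degree off the image of the boundary
    (hdeg₁ : ∀ f V, ∀ y ∉ f '' frontier V, ∀ᶠ y' in nhds y, deg f V y' = deg f V y)
    -- the degree vanishes outside the image of the closure
    (hdeg₂ : ∀ f (V : Set (EuclideanSpace ℝ (Fin d) × ℝ)), ∀ z ∉ f '' closure V,
      deg f V z = 0)
    (U : Set (EuclideanSpace ℝ (Fin d))) (hUb : Bornology.IsBounded U)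
    (u : EuclideanSpace ℝ (Fin d) → (EuclideanSpace ℝ (Fin d) × ℝ))
    -- u is a topological embedding of the closure of U
    (hu : IsEmbedding ((closure U).restrict u)) :
    ¬ ∃ U₁ U₂ : Set (EuclideanSpace ℝ (Fin d)),
        U₁ ⊆ U ∧ U₂ ⊆ U ∧ Disjoint U₁ U₂ ∧
        IsOpen U₁ ∧ IsOpen U₂ ∧ IsConnected U₁ ∧ IsConnected U₂ ∧
        SimplyConnectedSpace ↥U₁ ∧ SimplyConnectedSpace ↥U₂ ∧
        SimplyInterpenetrate d deg U₁ U₂ u u := by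
  rintro ⟨U₁, U₂, hU₁, hU₂, hdisj, hO₁, hO₂, hC₁, hC₂, _, _,
    uhat, hcont, hbase, ⟨k₁, k₂, hk, hv₁, hv₂⟩, hii₁, hii₂⟩
  set V := U₁ ×ˢ Icc (0:ℝ) 1 with hV
  set g : (EuclideanSpace ℝ (Fin d) × ℝ) → ℤ := deg uhat V with hg
  -- injectivity of u on closure U
  have hinj : ∀ x ∈ closure U, ∀ y ∈ closure U, u x = u y → x = y := by
    intro x hx y hy h
    have := hu.injective (a₁ := ⟨x, hx⟩) (a₂ := ⟨y, hy⟩) h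
    exact Subtype.mk_eq_mk.mp this
  -- points of u '' U₂ avoid the image of the frontier
  have hT : ∀ x ∈ U₂, u x ∉ uhat '' frontier V := by
    intro x hx hmem
    obtain ⟨p, hpf, hpe⟩ := hmem
    by_cases hp : p ∈ U₁ ×ˢ ({0} : Set ℝ)
    · obtain ⟨hp1, hp2⟩ := hp
      simp only [mem_singleton_iff] at hp2
      have hpe' : uhat (p.1, 0) = u x := by rw [← hp2, Prod.mk.eta]; exact hpe
      rw [hbase p.1 hp1] at hpe'
      have : p.1 = x := hinj p.1 (subset_closure (hU₁ hp1)) x (subset_closure (hU₂ hx)) hpe'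
      exact (hdisj.ne_of_mem hp1 hx) this
    · have h1 : u x ∈ uhat '' (frontier V \ (U₁ ×ˢ ({0} : Set ℝ))) :=
        ⟨p, ⟨hpf, hp⟩, hpe⟩
      have h2 : u x ∈ closure (u '' U₂) := subset_closure (mem_image_of_mem u hx)
      have : u x ∈ uhat '' (frontier V \ (U₁ ×ˢ ({0} : Set ℝ))) ∩ closure (u '' U₂) :=
        ⟨h1, h2⟩
      rw [hii₂] at this
      exact this
  -- u '' U₂ is connected
  have hcu : ContinuousOn u (closure U) := continuousOn_iff_continuous_restrict.mpr hu.continuous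
  have hTc : IsConnected (u '' U₂) := hC₂.image u (hcu.mono (hU₂.trans subset_closure))
  -- g is continuous on u '' U₂
  have hgc : ContinuousOn g (u '' U₂) := by
    intro y hy
    obtain ⟨x, hx, rfl⟩ := hy
    have h := hdeg₁ uhat V (u x) (hT x hx)
    have h' : ∀ᶠ y' in nhdsWithin (u x) (u '' U₂), g y' = g (u x) :=
      nhdsWithin_le_nhds h
    exact Filter.Tendsto.congr' (h'.mono fun a ha => ha.symm) tendsto_const_nhds
  -- hence g is constant on u '' U₂
  have hsub : (g '' (u '' U₂)).Subsingleton :=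
    (hTc.isPreconnected.image g hgc).subsingleton
  -- extract points from the positive-measure sets
  obtain ⟨x₁, hx₁U, _, hx₁d⟩ := nonempty_of_measure_ne_zero hv₁.ne'
  obtain ⟨x₂, hx₂U, _, hx₂d⟩ := nonempty_of_measure_ne_zero hv₂.ne'
  have : g (u x₁) = g (u x₂) :=
    hsub (mem_image_of_mem g (mem_image_of_mem u hx₁U))
      (mem_image_of_mem g (mem_image_of_mem u hx₂U))
  rw [hx₁d, hx₂d] at this
  exact hk (Nat.cast_injective this)
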